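/- Let p ≥ 3 be a prime and let S_{p-1} denote the point stabilizer of the p-th element in the symmetric group S_p. Then there do not exist subgroups N and R of S_p with S_{p-1} ≤ N ≤ R ≤ S_p, N normal in R, and R/N cyclic of order p. -/

import Mathlib

/-- There are subgroups `U ≤ N ≤ R ≤ V` with `N` normal in `R` and `R/N` cyclic of order `p`. -/
def HasCyclicStep {V : Type*} [Group V] (U : Subgroup V) (p : ℕ) : Prop :=
  ∃ N R : Subgroup V, U ≤ N ∧ N ≤ R ∧ ∃ hn : (N.subgroupOf R).Normal,
    letI := hn
    IsCyclic (↥R ⧸ N.subgroupOf R) ∧ Nat.card (↥R ⧸ N.subgroupOf R) = p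

/-!
Since `[R : N] = p` and `S_{p-1}` has index `p` in `S_p`, multiplicativity of the index along
`S_{p-1} ≤ N ≤ R ≤ S_p` forces `N = S_{p-1}` and `R = S_p`. So `S_{p-1}` would be normal in `S_p`,
but for `p ≥ 3` a transposition fixing the last point is conjugate to one moving it.
-/

namespace Subgroup

variable {G : Type*} [Group G]

theorem eq_top_and_eq_of_relIndex_eq_index {U N R : Subgroup G} (hUN : U ≤ N) (hNR : N ≤ R)
    (h : N.relIndex R = U.index) (h0 : U.index ≠ 0) : R = ⊤ ∧ N = U := by
  have hmul : U.relIndex N * (N.relIndex R * R.index) = U.index := by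
    rw [relIndex_mul_index hNR, relIndex_mul_index hUN]
  rw [h, mul_left_comm] at hmul
  have hone : U.relIndex N * R.index = 1 :=
    (Nat.mul_eq_left h0).mp hmul
  exact ⟨index_eq_one.mp (Nat.eq_one_of_mul_eq_one_left hone),
    le_antisymm (relIndex_eq_one.mp (Nat.eq_one_of_mul_eq_one_right hone)) hUN⟩

end Subgroup

theorem HasCyclicStep.normal_of_index_eq {G : Type*} [Group G] {U : Subgroup G} {n : ℕ}
    (hstep : HasCyclicStep U n) (hU : U.index = n) (hn : n ≠ 0) : U.Normal := by
  obtain ⟨N, R, hUN, hNR, hnormal, -, hcard⟩ := hstep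
  obtain ⟨rfl, rfl⟩ :=
    Subgroup.eq_top_and_eq_of_relIndex_eq_index hUN hNR (hcard.trans hU.symm) (hU ▸ hn)
  rw [Subgroup.normal_subgroupOf_iff_le_normalizer le_top, top_le_iff,
    Subgroup.normalizer_eq_top_iff] at hnormal
  exact hnormal

theorem Equiv.Perm.not_normal_stabilizer {α : Type*} [DecidableEq α] {a b c : α}
    (hab : a ≠ b) (hac : a ≠ c) (hbc : b ≠ c) :
    ¬ (MulAction.stabilizer (Equiv.Perm α) a).Normal := by
  intro hnormal
  have hfix : Equiv.swap b c ∈ MulAction.stabilizer (Equiv.Perm α) a :=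
    Equiv.swap_apply_of_ne_of_ne hab hac
  have hconj := hnormal.conj_mem _ hfix (Equiv.swap a b)
  rw [MulAction.mem_stabilizer_iff, Equiv.Perm.smul_def] at hconj
  simp only [Equiv.swap_inv, Equiv.Perm.coe_mul, Function.comp_apply, Equiv.swap_apply_left,
    Equiv.swap_apply_of_ne_of_ne hac.symm hbc.symm] at hconj
  exact hac hconj.symm

theorem symmetric_no_cyclic_step (p : ℕ) (hp3 : 3 ≤ p) :
    ¬ HasCyclicStep
      (MulAction.stabilizer (Equiv.Perm (Fin p)) (⟨p - 1, by omega⟩ : Fin p)) p := by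
  intro hstep
  have hindex := MulAction.index_stabilizer_of_transitive (Equiv.Perm (Fin p))
    (⟨p - 1, by omega⟩ : Fin p)
  rw [Nat.card_fin] at hindex
  refine Equiv.Perm.not_normal_stabilizer (b := ⟨0, by omega⟩) (c := ⟨1, by omega⟩)
    ?_ ?_ ?_ (hstep.normal_of_index_eq hindex (by omega)) <;> simp [Fin.ext_iff] <;> omega
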